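/- arXiv:2502.02491 — 3 statements merged into one kernel-verified Lean document; each statement's English description precedes it below -/
import Mathlib

section
/- For every integer N ≥ 1 and all coefficients γ₁,…,γ_N ∈ ℂ, the quantum angular momentum operator Ĉ := q̂₁p̂₂ − q̂₂p̂₁ commutes with the generalized quantum Zernike Hamiltonian Ĥ_N := p̂₁² + p̂₂² + Σ_{k=1}^N γ_k (q̂₁p̂₁ + q̂₂p̂₂)^k, i.e. ⁅Ĉ, Ĥ_N⁆ = 0 in End(V). -/
noncomputable section

/-- `V = ℂ[q₁,q₂]`, the polynomial ring in two variables over `ℂ`. -/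
abbrev V : Type := MvPolynomial (Fin 2) ℂ

/-- `q̂₁`: multiplication by `q₁`. -/
noncomputable def q1 : Module.End ℂ V := LinearMap.mulLeft ℂ (MvPolynomial.X 0)

/-- `q̂₂`: multiplication by `q₂`. -/
noncomputable def q2 : Module.End ℂ V := LinearMap.mulLeft ℂ (MvPolynomial.X 1)

/-- `p̂₁ = −i ∂/∂q₁`. -/
noncomputable def p1 : Module.End ℂ V :=
  (-Complex.I) • (MvPolynomial.pderiv (0 : Fin 2)).toLinearMap

/-- `p̂₂ = −i ∂/∂q₂`. -/
noncomputable def p2 : Module.End ℂ V :=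
  (-Complex.I) • (MvPolynomial.pderiv (1 : Fin 2)).toLinearMap

/-- `D = q̂₁p̂₁ + q̂₂p̂₂`. -/
noncomputable def Dop : Module.End ℂ V := q1 * p1 + q2 * p2

/-- `Ĉ = q̂₁p̂₂ − q̂₂p̂₁`, the quantum angular momentum. -/
noncomputable def Cop : Module.End ℂ V := q1 * p2 - q2 * p1

/-! Up to the factor `-i`, the operators `Ĉ`, `D` and `p̂ⱼ` are the derivations `q₁∂₂ - q₂∂₁`,
`q₁∂₁ + q₂∂₂` and `∂ⱼ` of `ℂ[q₁,q₂]`. A commutator of derivations is a derivation, hence is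
determined by its values on the variables; evaluating there shows that the rotation commutes with
the Euler derivation and that `⁅q₁∂₂ - q₂∂₁, ∂₁⁆ = -∂₂`, `⁅q₁∂₂ - q₂∂₁, ∂₂⁆ = ∂₁`. These two
relations alone force the rotation to commute with `∂₁² + ∂₂²`. -/

theorem commute_add_sq_of_lie_eq {A : Type*} [Ring A] {c a b : A} (ha : ⁅c, a⁆ = -b)
    (hb : ⁅c, b⁆ = a) : Commute c (a ^ 2 + b ^ 2) := by
  rw [Ring.lie_def] at ha hb
  rw [commute_iff_lie_eq, Ring.lie_def]
  calc c * (a ^ 2 + b ^ 2) - (a ^ 2 + b ^ 2) * c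
      = (c * a - a * c) * a + a * (c * a - a * c) + (c * b - b * c) * b
          + b * (c * b - b * c) := by noncomm_ring
    _ = 0 := by rw [ha, hb]; noncomm_ring

theorem Derivation.commute_coe_of_lie_eq_zero {R A : Type*} [CommRing R] [CommRing A] [Algebra R A]
    {D₁ D₂ : Derivation R A A} (h : ⁅D₁, D₂⁆ = 0) :
    Commute (D₁ : Module.End R A) (D₂ : Module.End R A) := by
  rw [commute_iff_lie_eq, ← Derivation.commutator_coe_linear_map, h]
  rfl

namespace MvPolynomial

variable {R σ : Type*} [CommRing R]

def rotationDerivation (i j : σ) : Derivation R (MvPolynomial σ R) (MvPolynomial σ R) :=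
  (X i : MvPolynomial σ R) • pderiv j - (X j : MvPolynomial σ R) • pderiv i

def eulerDerivation [Fintype σ] : Derivation R (MvPolynomial σ R) (MvPolynomial σ R) :=
  ∑ k, (X k : MvPolynomial σ R) • pderiv k

theorem eulerDerivation_X [Fintype σ] (k : σ) :
    eulerDerivation (X k : MvPolynomial σ R) = X k := by
  classical
  rw [eulerDerivation, ← Derivation.coeFnAddMonoidHom_apply, map_sum, Finset.sum_apply]
  simp [pderiv_X, Pi.single_apply]

theorem rotationDerivation_X [DecidableEq σ] (i j k : σ) :
    rotationDerivation i j (X k : MvPolynomial σ R) =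
      (if k = j then X i else 0) - (if k = i then X j else 0) := by
  simp [rotationDerivation, pderiv_X, Pi.single_apply]

theorem lie_rotationDerivation_pderiv_left {i j : σ} (hij : i ≠ j) :
    ⁅rotationDerivation (R := R) i j, pderiv (R := R) i⁆ = -pderiv j := by
  classical
  refine derivation_ext fun k => ?_
  simp only [Derivation.commutator_apply, rotationDerivation_X, pderiv_X, Pi.single_apply]
  split_ifs <;> simp_all [pderiv_X]

theorem lie_rotationDerivation_pderiv_right {i j : σ} (hij : i ≠ j) :
    ⁅rotationDerivation (R := R) i j, pderiv (R := R) j⁆ = pderiv i := by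
  classical
  refine derivation_ext fun k => ?_
  simp only [Derivation.commutator_apply, rotationDerivation_X, pderiv_X, Pi.single_apply]
  split_ifs <;> simp_all [pderiv_X]

theorem lie_rotationDerivation_eulerDerivation [Fintype σ] (i j : σ) :
    ⁅rotationDerivation (R := R) i j, eulerDerivation (R := R) (σ := σ)⁆ = 0 := by
  classical
  refine derivation_ext fun k => ?_
  simp only [Derivation.commutator_apply, rotationDerivation_X, eulerDerivation_X]
  split_ifs <;> simp [eulerDerivation_X]

end MvPolynomial

open MvPolynomial

theorem Cop_eq_smul_rotationDerivation :
    Cop = (-Complex.I) • ((rotationDerivation 0 1 : Derivation ℂ V V) : Module.End ℂ V) := by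
  refine LinearMap.ext fun f => ?_
  simp [Cop, rotationDerivation, q1, q2, p1, p2, smul_sub]

theorem Dop_eq_smul_eulerDerivation :
    Dop = (-Complex.I) • ((eulerDerivation : Derivation ℂ V V) : Module.End ℂ V) := by
  refine LinearMap.ext fun f => ?_
  simp [Dop, eulerDerivation, q1, q2, p1, p2, smul_add]

theorem commute_Cop_Dop : Commute Cop Dop := by
  rw [Cop_eq_smul_rotationDerivation, Dop_eq_smul_eulerDerivation]
  exact ((Derivation.commute_coe_of_lie_eq_zero
    (lie_rotationDerivation_eulerDerivation 0 1)).smul_left _).smul_right _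

theorem commute_Cop_p1_sq_add_p2_sq : Commute Cop (p1 ^ 2 + p2 ^ 2) := by
  have hp : p1 ^ 2 + p2 ^ 2 = (-Complex.I) ^ 2 •
      (((pderiv 0 : Derivation ℂ V V) : Module.End ℂ V) ^ 2 + (pderiv 1 : Derivation ℂ V V) ^ 2) := by
    rw [p1, p2, smul_pow, smul_pow, smul_add]
  rw [Cop_eq_smul_rotationDerivation, hp]
  refine ((commute_add_sq_of_lie_eq ?_ ?_).smul_left _).smul_right _
  · rw [← Derivation.commutator_coe_linear_map, lie_rotationDerivation_pderiv_left zero_ne_one]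
    rfl
  · rw [← Derivation.commutator_coe_linear_map, lie_rotationDerivation_pderiv_right zero_ne_one]

theorem zernike_angular_momentum_commutes_general (N : ℕ) (γ : ℕ → ℂ) :
    Cop * (p1 ^ 2 + p2 ^ 2 + ∑ k ∈ Finset.Icc 1 N, γ k • Dop ^ k)
      - (p1 ^ 2 + p2 ^ 2 + ∑ k ∈ Finset.Icc 1 N, γ k • Dop ^ k) * Cop = 0 :=
  sub_eq_zero_of_eq <| commute_Cop_p1_sq_add_p2_sq.add_right <|
    Commute.sum_right _ _ _ fun k _ => (commute_Cop_Dop.pow_right k).smul_right (γ k)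

/-- the angular momentum `Ĉ` commutes with the generalized quantum
Zernike Hamiltonian `Ĥ_N = p̂₁² + p̂₂² + Σ_{k=1}^N γ_k D^k` for every `N ≥ 1`
and all coefficients `γ_k ∈ ℂ`. -/
theorem zernike_angular_momentum_commutes (N : ℕ) (hN : 1 ≤ N) (γ : ℕ → ℂ) :
    Cop * (p1 ^ 2 + p2 ^ 2 + ∑ k ∈ Finset.Icc 1 N, γ k • Dop ^ k)
      - (p1 ^ 2 + p2 ^ 2 + ∑ k ∈ Finset.Icc 1 N, γ k • Dop ^ k) * Cop = 0 :=
  zernike_angular_momentum_commutes_general N γ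
end
end

section
/- For all γ₁, γ₂ ∈ ℂ, the second-order operators Î₂ := p̂₂² + γ₁ q̂₂p̂₂ + γ₂((q̂₁² + q̂₂²)p̂₂² − Ĉ²) and Î₂′ := p̂₁² + γ₁ q̂₁p̂₁ + γ₂(q̂₁² + q̂₂²)p̂₁² satisfy ⁅Î₂, Ĥ₂⁆ = 0, ⁅Î₂′, Ĥ₂⁆ = 0, and the algebraic relation Ĥ₂ = Î₂ + Î₂′, where Ĥ₂ := p̂₁² + p̂₂² + γ₁D + γ₂D². -/
/-!
Only the canonical commutation relations `⁅q̂ⱼ, p̂ₖ⁆ = i δⱼₖ`, `⁅q̂₁, q̂₂⁆ = ⁅p̂₁, p̂₂⁆ = 0` enter, so the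
argument runs in any algebra containing two such pairs, for any value of `ℏ` in place of `i`.

The relation `Ĥ₂ = Î₂ + Î₂′` is the identity `D² + Ĉ² = (q̂₁² + q̂₂²)(p̂₁² + p̂₂²)`: in `n` dimensions
the quantum correction to it is a multiple of `(n - 2) D`, which vanishes for `n = 2`. Given that
relation, `⁅Î₂, Ĥ₂⁆ = -⁅Î₂′, Ĥ₂⁆`, so it suffices that `Î₂′` commutes with `Ĥ₂`. The commutator
`⁅Î₂′, Ĥ₂⁆` is a polynomial in `γ₁, γ₂` whose coefficients vanish one by one: `q̂₁p̂₁` and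
`(q̂₁² + q̂₂²)p̂₁²` are invariant under the dilations generated by `D`, hence commute with `D`, and the
coefficients of `γ₁` and `γ₂` vanish by `⁅p̂₁², D⁆ = ⁅p̂², q̂₁p̂₁⁆` and
`⁅p̂₁², D²⁆ = ⁅p̂², (q̂₁² + q̂₂²)p̂₁²⁆`, with `p̂² = p̂₁² + p̂₂²`.
-/

noncomputable section

/-- `Ĥ₂ = p̂₁² + p̂₂² + γ₁D + γ₂D²`. -/
noncomputable def H2 (γ₁ γ₂ : ℂ) : Module.End ℂ V :=
  p1 ^ 2 + p2 ^ 2 + γ₁ • Dop + γ₂ • Dop ^ 2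

/-- `Î₂ = p̂₂² + γ₁ q̂₂p̂₂ + γ₂((q̂₁² + q̂₂²)p̂₂² − Ĉ²)`. -/
noncomputable def I2 (γ₁ γ₂ : ℂ) : Module.End ℂ V :=
  p2 ^ 2 + γ₁ • (q2 * p2) + γ₂ • ((q1 ^ 2 + q2 ^ 2) * p2 ^ 2 - Cop ^ 2)

/-- `Î₂′ = p̂₁² + γ₁ q̂₁p̂₁ + γ₂(q̂₁² + q̂₂²)p̂₁²`. -/
noncomputable def I2' (γ₁ γ₂ : ℂ) : Module.End ℂ V :=
  p1 ^ 2 + γ₁ • (q1 * p1) + γ₂ • ((q1 ^ 2 + q2 ^ 2) * p1 ^ 2)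

section CanonicalPairs

variable {R A : Type*} [CommRing R] [Ring A] [Algebra R A]

theorem commute_add_smul_add_smul_pow_two {a b c P D : A} (γ₁ γ₂ : R) (ha : Commute a P)
    (hb : Commute b D) (hc : Commute c D) (h₁ : a * D - D * a = P * b - b * P)
    (h₂ : a * D ^ 2 - D ^ 2 * a = P * c - c * P) :
    Commute (a + γ₁ • b + γ₂ • c) (P + γ₁ • D + γ₂ • D ^ 2) := by
  simp only [Commute, SemiconjBy, add_mul, mul_add, smul_mul_assoc, mul_smul_comm]
  linear_combination (norm := module) ha.eq + γ₁ • h₁ + γ₂ • h₂ + γ₁ ^ 2 • hb.eq +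
    (γ₁ * γ₂) • (hb.pow_right 2).eq + (γ₁ * γ₂) • hc.eq + γ₂ ^ 2 • (hc.pow_right 2).eq

structure IsCanonicalPairs (ℏ : R) (q₁ q₂ p₁ p₂ : A) : Prop where
  commute_q₁_q₂ : Commute q₁ q₂
  commute_p₁_p₂ : Commute p₁ p₂
  commute_q₁_p₂ : Commute q₁ p₂
  commute_q₂_p₁ : Commute q₂ p₁
  commutator_q₁_p₁ : q₁ * p₁ - p₁ * q₁ = ℏ • 1
  commutator_q₂_p₂ : q₂ * p₂ - p₂ * q₂ = ℏ • 1

namespace IsCanonicalPairs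

variable {ℏ : R} {q₁ q₂ p₁ p₂ : A} (h : IsCanonicalPairs ℏ q₁ q₂ p₁ p₂)
include h

/-- Normal-ordering rules: every `q` moves left of every `p`, index `1` left of index `2`;
`reorder_mul` is their form inside right-associated products. Both are conjunctions, so that
`simp only [h.reorder, h.reorder_mul]` uses every rule. -/
theorem reorder :
    q₂ * q₁ = q₁ * q₂ ∧ p₂ * p₁ = p₁ * p₂ ∧ p₁ * q₁ = q₁ * p₁ - ℏ • 1 ∧
      p₂ * q₂ = q₂ * p₂ - ℏ • 1 ∧ p₁ * q₂ = q₂ * p₁ ∧ p₂ * q₁ = q₁ * p₂ :=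
  ⟨h.commute_q₁_q₂.eq.symm, h.commute_p₁_p₂.eq.symm,
    by rw [← h.commutator_q₁_p₁, sub_sub_cancel], by rw [← h.commutator_q₂_p₂, sub_sub_cancel],
    h.commute_q₂_p₁.eq.symm, h.commute_q₁_p₂.eq.symm⟩

theorem reorder_mul (x : A) :
    q₂ * (q₁ * x) = q₁ * (q₂ * x) ∧ p₂ * (p₁ * x) = p₁ * (p₂ * x) ∧
      p₁ * (q₁ * x) = q₁ * (p₁ * x) - ℏ • x ∧ p₂ * (q₂ * x) = q₂ * (p₂ * x) - ℏ • x ∧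
      p₁ * (q₂ * x) = q₂ * (p₁ * x) ∧ p₂ * (q₁ * x) = q₁ * (p₂ * x) := by
  simp only [← mul_assoc, h.reorder, sub_mul, smul_one_mul, and_self]

theorem euler_sq_add_angular_sq :
    (q₁ * p₁ + q₂ * p₂) ^ 2 + (q₁ * p₂ - q₂ * p₁) ^ 2 = (q₁ ^ 2 + q₂ ^ 2) * (p₁ ^ 2 + p₂ ^ 2) := by
  simp only [pow_two, mul_add, add_mul, mul_sub, sub_mul, mul_smul_comm, mul_assoc, h.reorder,
    h.reorder_mul]
  module

theorem commute_q₁_mul_p₁_euler : Commute (q₁ * p₁) (q₁ * p₁ + q₂ * p₂) := by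
  refine (Commute.refl _).add_right ?_
  simp only [Commute, SemiconjBy, mul_assoc, h.reorder, h.reorder_mul]

theorem commute_radius_sq_mul_p₁_sq_euler :
    Commute ((q₁ ^ 2 + q₂ ^ 2) * p₁ ^ 2) (q₁ * p₁ + q₂ * p₂) := by
  simp only [Commute, SemiconjBy, pow_two, mul_add, add_mul, mul_sub, mul_smul_comm, mul_assoc,
    h.reorder, h.reorder_mul]
  module

theorem commutator_p₁_sq_euler :
    p₁ ^ 2 * (q₁ * p₁ + q₂ * p₂) - (q₁ * p₁ + q₂ * p₂) * p₁ ^ 2 =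
      (p₁ ^ 2 + p₂ ^ 2) * (q₁ * p₁) - q₁ * p₁ * (p₁ ^ 2 + p₂ ^ 2) := by
  simp only [pow_two, mul_add, add_mul, mul_sub, mul_smul_comm, mul_assoc, h.reorder,
    h.reorder_mul]
  module

theorem commutator_p₁_sq_euler_sq :
    p₁ ^ 2 * (q₁ * p₁ + q₂ * p₂) ^ 2 - (q₁ * p₁ + q₂ * p₂) ^ 2 * p₁ ^ 2 =
      (p₁ ^ 2 + p₂ ^ 2) * ((q₁ ^ 2 + q₂ ^ 2) * p₁ ^ 2) -
        (q₁ ^ 2 + q₂ ^ 2) * p₁ ^ 2 * (p₁ ^ 2 + p₂ ^ 2) := by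
  simp only [pow_two, mul_add, add_mul, mul_sub, sub_mul, smul_mul_assoc, mul_smul_comm, mul_assoc,
    h.reorder, h.reorder_mul]
  module

theorem commute_integral_hamiltonian (γ₁ γ₂ : R) :
    Commute (p₁ ^ 2 + γ₁ • (q₁ * p₁) + γ₂ • ((q₁ ^ 2 + q₂ ^ 2) * p₁ ^ 2))
      (p₁ ^ 2 + p₂ ^ 2 + γ₁ • (q₁ * p₁ + q₂ * p₂) + γ₂ • (q₁ * p₁ + q₂ * p₂) ^ 2) :=
  commute_add_smul_add_smul_pow_two γ₁ γ₂
    ((Commute.refl _).add_right (h.commute_p₁_p₂.pow_pow 2 2)) h.commute_q₁_mul_p₁_euler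
    h.commute_radius_sq_mul_p₁_sq_euler h.commutator_p₁_sq_euler h.commutator_p₁_sq_euler_sq

theorem hamiltonian_eq_add (γ₁ γ₂ : R) :
    p₁ ^ 2 + p₂ ^ 2 + γ₁ • (q₁ * p₁ + q₂ * p₂) + γ₂ • (q₁ * p₁ + q₂ * p₂) ^ 2 =
      (p₂ ^ 2 + γ₁ • (q₂ * p₂) + γ₂ • ((q₁ ^ 2 + q₂ ^ 2) * p₂ ^ 2 - (q₁ * p₂ - q₂ * p₁) ^ 2)) +
        (p₁ ^ 2 + γ₁ • (q₁ * p₁) + γ₂ • ((q₁ ^ 2 + q₂ ^ 2) * p₁ ^ 2)) := by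
  rw [eq_sub_of_add_eq h.euler_sq_add_angular_sq, mul_add]
  module

end IsCanonicalPairs

end CanonicalPairs

open MvPolynomial in
theorem MvPolynomial.commute_pderiv {R σ : Type*} [CommRing R] (i j : σ) :
    Commute (pderiv (R := R) i).toLinearMap (pderiv (R := R) j).toLinearMap := by
  have h : ⁅pderiv (R := R) i, pderiv (R := R) j⁆ = 0 := by
    classical
    exact derivation_ext fun k => by
      rw [Derivation.commutator_apply]; simp [pderiv_X, Pi.single_apply, apply_ite]
  rw [commute_iff_lie_eq, ← Derivation.commutator_coe_linear_map, h]
  rfl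

theorem isCanonicalPairs_q1_q2_p1_p2 : IsCanonicalPairs Complex.I q1 q2 p1 p2 where
  commute_q₁_q₂ := by ext f; simp [q1, q2, mul_left_comm]
  commute_p₁_p₂ := ((MvPolynomial.commute_pderiv (R := ℂ) 0 1).smul_left _).smul_right _
  commute_q₁_p₂ := by ext f; simp [q1, p2, MvPolynomial.pderiv_X]
  commute_q₂_p₁ := by ext f; simp [q2, p1, MvPolynomial.pderiv_X]
  commutator_q₁_p₁ := by ext f; simp [q1, p1, MvPolynomial.pderiv_X]
  commutator_q₂_p₂ := by ext f; simp [q2, p2, MvPolynomial.pderiv_X]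

/-- `Î₂` and `Î₂′` commute with `Ĥ₂` and `Ĥ₂ = Î₂ + Î₂′`. -/
theorem quadratic_zernike_symmetries (γ₁ γ₂ : ℂ) :
    I2 γ₁ γ₂ * H2 γ₁ γ₂ - H2 γ₁ γ₂ * I2 γ₁ γ₂ = 0 ∧
    I2' γ₁ γ₂ * H2 γ₁ γ₂ - H2 γ₁ γ₂ * I2' γ₁ γ₂ = 0 ∧
    H2 γ₁ γ₂ = I2 γ₁ γ₂ + I2' γ₁ γ₂ := by
  have hH : H2 γ₁ γ₂ = I2 γ₁ γ₂ + I2' γ₁ γ₂ :=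
    isCanonicalPairs_q1_q2_p1_p2.hamiltonian_eq_add γ₁ γ₂
  have hI' : Commute (I2' γ₁ γ₂) (H2 γ₁ γ₂) :=
    isCanonicalPairs_q1_q2_p1_p2.commute_integral_hamiltonian γ₁ γ₂
  have hI : Commute (I2 γ₁ γ₂) (H2 γ₁ γ₂) := by
    rw [hH] at hI' ⊢
    have : Commute (I2' γ₁ γ₂) (I2 γ₁ γ₂) := by simpa using hI'.sub_right (Commute.refl _)
    exact (Commute.refl _).add_right this.symm
  exact ⟨sub_eq_zero.2 hI.eq, sub_eq_zero.2 hI'.eq, hH⟩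
end
end

section
/- For all γ₁, γ₂ ∈ ℂ, the operators K₁ := Ĉ, K₂ := (1/2)(Î₂′ − Î₂), K₃ := ⁅K₁, K₂⁆ close the polynomial commutation relations ⁅K₁, K₃⁆ = 4K₂ − 2γ₂K₁² and ⁅K₂, K₃⁆ = (γ₁² + 2iγ₁γ₂ + 2γ₂Ĥ₂)K₁ + 4γ₂K₁K₂ − 2γ₂K₃ in End(V). -/
/-!
Let r² = q̂₁² + q̂₂² and split `K₂ = ½(A + γ₂Ĉ²)` with
`A = (1 + γ₂r²)(p̂₁² − p̂₂²) + γ₁(q̂₁p̂₁ − q̂₂p̂₂)`; put `B = 2(1 + γ₂r²)p̂₁p̂₂ + γ₁(q̂₁p̂₂ + q̂₂p̂₁)`.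
Since `Ĉ` generates rotations and commutes with `r²`, `ad Ĉ` rotates the quadrupole pair `(A, B)`:
`⁅Ĉ, A⁆ = 2iB` and `⁅Ĉ, B⁆ = −2iA`. Hence `K₃ = iB` and `⁅K₁, K₃⁆ = 2A = 4K₂ − 2γ₂Ĉ²`.
For the second relation, `⁅Ĉ², B⁆ = −2i(ĈA + AĈ) = −4iĈA − 4B` leaves the single commutator `⁅A, B⁆`,
which normal ordering (all `q̂` to the left of all `p̂`) identifies as
`−2i(γ₁² + 2iγ₁γ₂ + 2γ₂Ĥ₂ + 2γ₂²Ĉ²)Ĉ`.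
-/

noncomputable section

/-- `K₁ = Ĉ`. -/
noncomputable def K1 : Module.End ℂ V := Cop

/-- `K₂ = (1/2)(Î₂′ − Î₂)`. -/
noncomputable def K2 (γ₁ γ₂ : ℂ) : Module.End ℂ V :=
  ((1 : ℂ)/2) • (I2' γ₁ γ₂ - I2 γ₁ γ₂)

/-- `K₃ = ⁅K₁, K₂⁆`. -/
noncomputable def K3 (γ₁ γ₂ : ℂ) : Module.End ℂ V :=
  K1 * K2 γ₁ γ₂ - K2 γ₁ γ₂ * K1

open MvPolynomial Complex

theorem MvPolynomial.pderiv_pderiv_comm {R σ : Type*} [CommRing R] (i j : σ)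
    (f : MvPolynomial σ R) : pderiv i (pderiv j f) = pderiv j (pderiv i f) := by
  have h : ⁅pderiv i, pderiv j⁆ = (0 : Derivation R (MvPolynomial σ R) (MvPolynomial σ R)) :=
    derivation_ext fun k => by
      classical
      rw [Derivation.commutator_apply]
      simp [pderiv_X, Pi.single_apply, apply_ite]
  simpa [Derivation.commutator_apply, sub_eq_zero] using congr($h f)

theorem Ring.sq_lie {R : Type*} [Ring R] (a b : R) : ⁅a ^ 2, b⁆ = a * ⁅a, b⁆ + ⁅a, b⁆ * a := by
  simp only [Ring.lie_def, sq]
  noncomm_ring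

lemma p1_mul_q1 : p1 * q1 = q1 * p1 - I • 1 := LinearMap.ext fun f => by
  simp [p1, q1, pderiv_X]
  ring

lemma p2_mul_q2 : p2 * q2 = q2 * p2 - I • 1 := LinearMap.ext fun f => by
  simp [p2, q2, pderiv_X]
  ring

lemma p1_mul_q1_mul (x : Module.End ℂ V) : p1 * (q1 * x) = q1 * (p1 * x) - I • x := by
  rw [← mul_assoc, p1_mul_q1, sub_mul, smul_mul_assoc, one_mul, mul_assoc]

lemma p2_mul_q2_mul (x : Module.End ℂ V) : p2 * (q2 * x) = q2 * (p2 * x) - I • x := by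
  rw [← mul_assoc, p2_mul_q2, sub_mul, smul_mul_assoc, one_mul, mul_assoc]

lemma commute_p1_q2 : Commute p1 q2 := LinearMap.ext fun f => by
  simp [p1, q2, pderiv_X]

lemma commute_p2_q1 : Commute p2 q1 := LinearMap.ext fun f => by
  simp [p2, q1, pderiv_X]

lemma commute_q2_q1 : Commute q2 q1 := LinearMap.ext fun f => by
  simp [q1, q2]
  ring

lemma commute_p2_p1 : Commute p2 p1 := LinearMap.ext fun f => by
  simp [p1, p2, pderiv_pderiv_comm (1 : Fin 2) 0]

def Aop (γ₁ γ₂ : ℂ) : Module.End ℂ V :=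
  p1 ^ 2 - p2 ^ 2 + γ₁ • (q1 * p1 - q2 * p2) + γ₂ • ((q1 ^ 2 + q2 ^ 2) * (p1 ^ 2 - p2 ^ 2))

def Bop (γ₁ γ₂ : ℂ) : Module.End ℂ V :=
  (2 : ℂ) • (p1 * p2) + γ₁ • (q1 * p2 + q2 * p1) + (2 * γ₂) • ((q1 ^ 2 + q2 ^ 2) * (p1 * p2))

lemma K2_eq (γ₁ γ₂ : ℂ) : K2 γ₁ γ₂ = (1 / 2 : ℂ) • (Aop γ₁ γ₂ + γ₂ • Cop ^ 2) := by
  simp only [K2, I2, I2', Aop, mul_sub]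
  module

lemma lie_Cop_Aop (γ₁ γ₂ : ℂ) : ⁅Cop, Aop γ₁ γ₂⁆ = (2 * I) • Bop γ₁ γ₂ := by
  simp only [Ring.lie_def, Cop, Aop, Bop]
  simp only [sq, mul_add, add_mul, mul_sub, sub_mul, smul_mul_assoc, mul_smul_comm, smul_smul,
    smul_add, smul_sub, mul_assoc, p1_mul_q1_mul, p2_mul_q2_mul, commute_p1_q2.left_comm,
    commute_p2_q1.left_comm, commute_q2_q1.left_comm, commute_p2_p1.left_comm, commute_p2_p1.eq]
  match_scalars <;> grind [I_sq]

lemma lie_Cop_Bop (γ₁ γ₂ : ℂ) : ⁅Cop, Bop γ₁ γ₂⁆ = (-2 * I) • Aop γ₁ γ₂ := by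
  simp only [Ring.lie_def, Cop, Aop, Bop]
  simp only [sq, mul_add, add_mul, mul_sub, sub_mul, smul_mul_assoc, mul_smul_comm, smul_smul,
    smul_add, smul_sub, mul_assoc, p1_mul_q1_mul, p2_mul_q2_mul, commute_p1_q2.left_comm,
    commute_p2_q1.left_comm, commute_q2_q1.left_comm, commute_p2_p1.left_comm, commute_p2_p1.eq]
  match_scalars <;> grind [I_sq]

lemma lie_Aop_Bop (γ₁ γ₂ : ℂ) : ⁅Aop γ₁ γ₂, Bop γ₁ γ₂⁆ = (-2 * I) •
    (((γ₁ ^ 2 + 2 * I * γ₁ * γ₂) • 1 + (2 * γ₂) • H2 γ₁ γ₂ + (2 * γ₂ ^ 2) • Cop ^ 2) * Cop) := by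
  simp only [Ring.lie_def, H2, Dop, Cop, Aop, Bop]
  simp only [sq, mul_add, add_mul, mul_sub, sub_mul, smul_mul_assoc, mul_smul_comm, smul_smul,
    smul_add, smul_sub, mul_assoc, one_mul, p1_mul_q1_mul, p2_mul_q2_mul, commute_p1_q2.left_comm,
    commute_p2_q1.left_comm, commute_q2_q1.left_comm, commute_p2_p1.left_comm, commute_p2_p1.eq]
  match_scalars <;> grind [I_sq]

lemma K3_eq (γ₁ γ₂ : ℂ) : K3 γ₁ γ₂ = I • Bop γ₁ γ₂ := by
  have h : K3 γ₁ γ₂ = (1 / 2 : ℂ) • (⁅Cop, Aop γ₁ γ₂⁆ + γ₂ • ⁅Cop, Cop ^ 2⁆) := by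
    simp only [K3, K1, K2_eq, Ring.lie_def, mul_smul_comm, smul_mul_assoc, mul_add, add_mul]
    module
  rw [h, lie_Cop_Aop, (Commute.self_pow Cop 2).lie_eq]
  module

lemma lie_Cop_sq_Bop (γ₁ γ₂ : ℂ) :
    ⁅Cop ^ 2, Bop γ₁ γ₂⁆ = (-4 * I) • (Cop * Aop γ₁ γ₂) - (4 : ℂ) • Bop γ₁ γ₂ := by
  have hAC : Aop γ₁ γ₂ * Cop = Cop * Aop γ₁ γ₂ - (2 * I) • Bop γ₁ γ₂ := by
    rw [← lie_Cop_Aop, Ring.lie_def, sub_sub_cancel]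
  rw [Ring.sq_lie, lie_Cop_Bop, mul_smul_comm, smul_mul_assoc, hAC]
  match_scalars <;> grind [I_sq]

/-- the polynomial (Higgs-type) commutation relations
`⁅K₁, K₃⁆ = 4K₂ − 2γ₂K₁²` and
`⁅K₂, K₃⁆ = (γ₁² + 2iγ₁γ₂ + 2γ₂Ĥ₂)K₁ + 4γ₂K₁K₂ − 2γ₂K₃`. -/
theorem quadratic_zernike_polynomial_algebra (γ₁ γ₂ : ℂ) :
    K1 * K3 γ₁ γ₂ - K3 γ₁ γ₂ * K1 = (4 : ℂ) • K2 γ₁ γ₂ - (2 * γ₂) • K1 ^ 2 ∧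
    K2 γ₁ γ₂ * K3 γ₁ γ₂ - K3 γ₁ γ₂ * K2 γ₁ γ₂
      = ((γ₁ ^ 2 + 2 * Complex.I * γ₁ * γ₂) • (1 : Module.End ℂ V)
            + (2 * γ₂) • H2 γ₁ γ₂) * K1
        + (4 * γ₂) • (K1 * K2 γ₁ γ₂) - (2 * γ₂) • K3 γ₁ γ₂ := by
  rw [K3_eq, K2_eq, K1]
  constructor
  · have h : Cop * I • Bop γ₁ γ₂ - I • Bop γ₁ γ₂ * Cop = I • ⁅Cop, Bop γ₁ γ₂⁆ := by
      rw [Ring.lie_def, mul_smul_comm, smul_mul_assoc, smul_sub]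
    rw [h, lie_Cop_Bop]
    match_scalars <;> grind [I_sq]
  · have h : (1 / 2 : ℂ) • (Aop γ₁ γ₂ + γ₂ • Cop ^ 2) * I • Bop γ₁ γ₂
        - I • Bop γ₁ γ₂ * (1 / 2 : ℂ) • (Aop γ₁ γ₂ + γ₂ • Cop ^ 2)
        = (I / 2) • (⁅Aop γ₁ γ₂, Bop γ₁ γ₂⁆ + γ₂ • ⁅Cop ^ 2, Bop γ₁ γ₂⁆) := by
      simp only [Ring.lie_def, mul_smul_comm, smul_mul_assoc, mul_add, add_mul]
      module
    rw [h, lie_Aop_Bop, lie_Cop_sq_Bop]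
    simp only [mul_smul_comm, smul_mul_assoc, mul_add, add_mul, one_mul, ← pow_succ, ← pow_succ']
    match_scalars <;> grind [I_sq]
end
end
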